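/- arXiv:0802.2848 — 4 statements merged into one kernel-verified Lean document; each statement's English description precedes it below -/
import Mathlib

section
/- With comultiplication Δ: A → A ⊗ A given by Δ(1) = 1⊗X + X⊗1 - h·(1⊗1) and Δ(X) = X⊗X + a·(1⊗1), the pair (m, Δ) satisfies the Frobenius condition: Δ∘m = (m⊗id)∘(id⊗Δ) = (id⊗m)∘(Δ⊗id). -/
/-!
For a commutative algebra `A`, both Frobenius identities follow once `Δ` is a map of
`A`-bimodules, i.e. `Δ x = (x ⊗ 1) Δ(1) = (1 ⊗ x) Δ(1)`: then `Δ(xy) = (x ⊗ 1) Δ(y)` and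
`Δ(xy) = Δ(x) (1 ⊗ y)`. As `A` is free over `R` on `1, X`, bimodule linearity only needs to be
checked at `X`, where it is the relation `X² = hX + a`.
-/

noncomputable section

open Polynomial TensorProduct

abbrev R : Type := MvPolynomial (Fin 2) GaussianInt
abbrev aR : R := MvPolynomial.X 0
abbrev hR : R := MvPolynomial.X 1
abbrev fpoly : Polynomial R := Polynomial.X ^ 2 - Polynomial.C hR * Polynomial.X - Polynomial.C aR
abbrev A : Type := AdjoinRoot fpoly
abbrev XA : A := AdjoinRoot.root fpoly

theorem AdjoinRoot.linearMap_ext_of_natDegree_eq_two {S : Type*} [CommRing S] {g : S[X]}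
    (hg : g.Monic) (hdeg : g.natDegree = 2) {M : Type*} [AddCommMonoid M] [Module S M]
    {F G : AdjoinRoot g →ₗ[S] M} (h1 : F 1 = G 1) (hroot : F (root g) = G (root g)) : F = G := by
  refine (powerBasis' hg).basis.ext fun ⟨i, hi⟩ => ?_
  rw [PowerBasis.basis_eq_pow]
  replace hi : i < 2 := hdeg ▸ hi
  interval_cases i <;> simpa

section FrobeniusOfBimodule

variable {S B : Type*} [CommRing S] [CommRing B] [Algebra S B]

theorem TensorProduct.map_mul'_id_assoc_symm_tmul (x : B) (t : B ⊗[S] B) :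
    map (LinearMap.mul' S B) LinearMap.id ((TensorProduct.assoc S B B B).symm (x ⊗ₜ t)) =
      (x ⊗ₜ 1) * t := by
  induction t with
  | zero => simp
  | tmul y z => simp
  | add t u ht hu => simp [tmul_add, ht, hu, mul_add]

theorem TensorProduct.map_id_mul'_assoc_tmul (t : B ⊗[S] B) (y : B) :
    map LinearMap.id (LinearMap.mul' S B) (TensorProduct.assoc S B B B (t ⊗ₜ y)) =
      t * (1 ⊗ₜ y) := by
  induction t with
  | zero => simp
  | tmul x z => simp
  | add t u ht hu => simp [add_tmul, ht, hu, add_mul]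

variable {Δ : B →ₗ[S] B ⊗[S] B}

theorem comp_mul'_eq_map_mul'_id_comp (hΔ : ∀ x, Δ x = (x ⊗ₜ 1) * Δ 1) :
    Δ ∘ₗ LinearMap.mul' S B =
      map (LinearMap.mul' S B) LinearMap.id ∘ₗ (TensorProduct.assoc S B B B).symm.toLinearMap ∘ₗ
        map LinearMap.id Δ := by
  refine TensorProduct.ext' fun x y => ?_
  simp only [LinearMap.coe_comp, LinearEquiv.coe_coe, Function.comp_apply, LinearMap.mul'_apply,
    map_tmul, LinearMap.id_coe, id_eq, map_mul'_id_assoc_symm_tmul]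
  rw [hΔ, hΔ y, ← mul_assoc, Algebra.TensorProduct.tmul_mul_tmul, mul_one]

theorem comp_mul'_eq_map_id_mul'_comp (hΔ : ∀ x, Δ x = (1 ⊗ₜ x) * Δ 1) :
    Δ ∘ₗ LinearMap.mul' S B =
      map LinearMap.id (LinearMap.mul' S B) ∘ₗ (TensorProduct.assoc S B B B).toLinearMap ∘ₗ
        map Δ LinearMap.id := by
  refine TensorProduct.ext' fun x y => ?_
  simp only [LinearMap.coe_comp, LinearEquiv.coe_coe, Function.comp_apply, LinearMap.mul'_apply,
    map_tmul, LinearMap.id_coe, id_eq, map_id_mul'_assoc_tmul]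
  rw [hΔ, hΔ x, mul_right_comm, Algebra.TensorProduct.tmul_mul_tmul, mul_one]

end FrobeniusOfBimodule

theorem fpoly_monic : fpoly.Monic := by
  rw [fpoly, sub_sub]
  exact monic_X_pow_sub (by compute_degree!)

theorem fpoly_natDegree : fpoly.natDegree = 2 := by
  rw [fpoly, sub_sub, natDegree_sub_eq_left_of_natDegree_lt] <;> compute_degree!

theorem XA_mul_XA : XA * XA = hR • XA + aR • (1 : A) := by
  have h := AdjoinRoot.eval₂_root fpoly
  simp only [fpoly, eval₂_sub, eval₂_pow, eval₂_mul, eval₂_C, eval₂_X] at h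
  rw [Algebra.smul_def, Algebra.smul_def, AdjoinRoot.algebraMap_eq]
  linear_combination h

theorem XA_tmul_one_mul :
    (XA ⊗ₜ[R] (1 : A)) * (1 ⊗ₜ XA + XA ⊗ₜ 1 - hR • (1 ⊗ₜ 1)) = XA ⊗ₜ XA + aR • (1 ⊗ₜ 1) := by
  simp only [mul_add, mul_sub, Algebra.TensorProduct.tmul_mul_tmul, mul_one, one_mul, XA_mul_XA,
    add_tmul, smul_tmul', Algebra.mul_smul_comm]
  module

theorem one_tmul_XA_mul :
    ((1 : A) ⊗ₜ[R] XA) * (1 ⊗ₜ XA + XA ⊗ₜ 1 - hR • (1 ⊗ₜ 1)) = XA ⊗ₜ XA + aR • (1 ⊗ₜ 1) := by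
  simp only [mul_add, mul_sub, Algebra.TensorProduct.tmul_mul_tmul, mul_one, one_mul, XA_mul_XA,
    tmul_add, tmul_smul, Algebra.mul_smul_comm]
  module

/-- With `Δ(1) = 1⊗X + X⊗1 - h·(1⊗1)` and `Δ(X) = X⊗X + a·(1⊗1)`, the pair `(m, Δ)`
satisfies the Frobenius condition `Δ∘m = (m⊗id)∘(id⊗Δ) = (id⊗m)∘(Δ⊗id)`. -/
theorem frobenius_condition (Δ : A →ₗ[R] A ⊗[R] A)
    (hΔ1 : Δ 1 = 1 ⊗ₜ XA + XA ⊗ₜ 1 - hR • (1 ⊗ₜ 1))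
    (hΔX : Δ XA = XA ⊗ₜ XA + aR • (1 ⊗ₜ 1)) :
    Δ ∘ₗ LinearMap.mul' R A =
        (TensorProduct.map (LinearMap.mul' R A) LinearMap.id) ∘ₗ
          (TensorProduct.assoc R A A A).symm.toLinearMap ∘ₗ
            (TensorProduct.map LinearMap.id Δ) ∧
      (TensorProduct.map (LinearMap.mul' R A) LinearMap.id) ∘ₗ
          (TensorProduct.assoc R A A A).symm.toLinearMap ∘ₗ
            (TensorProduct.map LinearMap.id Δ) =
        (TensorProduct.map LinearMap.id (LinearMap.mul' R A)) ∘ₗ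
          (TensorProduct.assoc R A A A).toLinearMap ∘ₗ
            (TensorProduct.map Δ LinearMap.id) := by
  have hleft : Δ = LinearMap.mulRight R (Δ 1) ∘ₗ (TensorProduct.mk R A A).flip 1 :=
    AdjoinRoot.linearMap_ext_of_natDegree_eq_two fpoly_monic fpoly_natDegree
      (by simp [← Algebra.TensorProduct.one_def]) (by simp [hΔ1, hΔX, XA_tmul_one_mul])
  have hright : Δ = LinearMap.mulRight R (Δ 1) ∘ₗ TensorProduct.mk R A A 1 :=
    AdjoinRoot.linearMap_ext_of_natDegree_eq_two fpoly_monic fpoly_natDegree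
      (by simp [← Algebra.TensorProduct.one_def]) (by simp [hΔ1, hΔX, one_tmul_XA_mul])
  have h₁ := comp_mul'_eq_map_mul'_id_comp (LinearMap.congr_fun hleft)
  have h₂ := comp_mul'_eq_map_id_mul'_comp (LinearMap.congr_fun hright)
  exact ⟨h₁, h₁.symm.trans h₂⟩
end
end

section
/- Under the grading deg(a) = 4, deg(h) = 2, deg(1) = -1, deg(X) = 1 on A, the multiplication m and comultiplication Δ are homogeneous maps of degree 1, and ε and the unit inclusion ι are homogeneous of degree -1. -/
noncomputable section

open Polynomial TensorProduct

/-- The weights giving `deg a = 4`, `deg h = 2` on `R = ℤ[i][a,h]`. -/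
abbrev wt : Fin 2 → ℤ := ![4, 2]

/-- Homogeneity of degree `n` in `R`, with `deg a = 4`, `deg h = 2`. -/
def HomogR (p : R) (n : ℤ) : Prop := MvPolynomial.IsWeightedHomogeneous wt p n

/-- Homogeneity of degree `n` in `A = R·1 ⊕ R·X`, where `deg 1 = -1` and `deg X = 1`
shift the gradings of the two summands. -/
def HomogA (x : A) (n : ℤ) : Prop :=
  ∃ p q : R, HomogR p (n + 1) ∧ HomogR q (n - 1) ∧
    x = algebraMap R A p + algebraMap R A q * XA

lemma homogR_zero (n : ℤ) : HomogR 0 n := MvPolynomial.isWeightedHomogeneous_zero _ _ _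

lemma homogR_cast {p : R} {m n : ℤ} (h : HomogR p m) (e : m = n) : HomogR p n := e ▸ h

lemma homogR_add {p q : R} {n : ℤ} (hp : HomogR p n) (hq : HomogR q n) : HomogR (p + q) n :=
  MvPolynomial.IsWeightedHomogeneous.add hp hq

lemma homogR_mul {p q : R} {m n : ℤ} (hp : HomogR p m) (hq : HomogR q n) : HomogR (p * q) (m + n) :=
  MvPolynomial.IsWeightedHomogeneous.mul hp hq

lemma homogR_one : HomogR 1 0 := MvPolynomial.isWeightedHomogeneous_one _ _

lemma homogR_a : HomogR aR 4 := MvPolynomial.isWeightedHomogeneous_X _ wt 0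

lemma homogR_h : HomogR hR 2 := MvPolynomial.isWeightedHomogeneous_X _ wt 1

lemma X_sq : XA * XA = algebraMap R A hR * XA + algebraMap R A aR := by
  have h := AdjoinRoot.eval₂_root fpoly
  simp only [fpoly, eval₂_sub, eval₂_mul, eval₂_pow, eval₂_X, eval₂_C, ← AdjoinRoot.algebraMap_eq] at h
  linear_combination (norm := (push_cast; ring_nf)) h

lemma homogA_cast {x : A} {m n : ℤ} (h : HomogA x m) (e : m = n) : HomogA x n := e ▸ h

lemma homogA_mk {p q : R} {n : ℤ} (hp : HomogR p (n + 1)) (hq : HomogR q (n - 1)) :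
    HomogA (algebraMap R A p + algebraMap R A q * XA) n := ⟨p, q, hp, hq, rfl⟩

lemma homogA_map {p : R} {n : ℤ} (hp : HomogR p n) : HomogA (algebraMap R A p) (n - 1) :=
  ⟨p, 0, homogR_cast hp (by ring), homogR_zero _, by simp⟩

lemma homogA_mapX {q : R} {n : ℤ} (hq : HomogR q n) : HomogA (algebraMap R A q * XA) (n + 1) :=
  ⟨0, q, homogR_zero _, homogR_cast hq (by ring), by simp⟩

lemma homogA_one : HomogA 1 (-1) := by
  have := homogA_map homogR_one
  simpa using this

lemma homogA_X : HomogA XA 1 := by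
  have := homogA_mapX (q := 1) homogR_one
  simpa using this

/-- Under the grading `deg a = 4`, `deg h = 2`, `deg 1 = -1`, `deg X = 1`, the
multiplication `m` and comultiplication `Δ` are homogeneous of degree `1`, while the
counit `ε` and the unit `ι = algebraMap R A` are homogeneous of degree `-1`. -/
theorem frobenius_maps_graded (Δ : A →ₗ[R] A ⊗[R] A) (ε : A →ₗ[R] R)
    (hΔ1 : Δ 1 = 1 ⊗ₜ XA + XA ⊗ₜ 1 - hR • (1 ⊗ₜ 1))
    (hΔX : Δ XA = XA ⊗ₜ XA + aR • (1 ⊗ₜ 1))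
    (hε1 : ε 1 = 0) (hεX : ε XA = 1) :
    (∀ (k l : ℤ) (x y : A), HomogA x k → HomogA y l → HomogA (x * y) (k + l + 1)) ∧
      (∀ (k : ℤ) (x : A), HomogA x k →
        Δ x ∈ Submodule.span ℤ {t : A ⊗[R] A |
          ∃ (u v : A) (k₁ k₂ : ℤ), k₁ + k₂ = k + 1 ∧ HomogA u k₁ ∧ HomogA v k₂ ∧
            t = u ⊗ₜ v}) ∧
      (∀ (k : ℤ) (x : A), HomogA x k → HomogR (ε x) (k - 1)) ∧
      (∀ (n : ℤ) (p : R), HomogR p n → HomogA (algebraMap R A p) (n - 1)) := by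
  refine ⟨?_, ?_, ?_, fun n p hp => homogA_map hp⟩
  · rintro k l x y ⟨p, q, hp, hq, rfl⟩ ⟨p', q', hp', hq', rfl⟩
    refine ⟨p * p' + aR * (q * q'), p * q' + q * p' + hR * (q * q'), ?_, ?_, ?_⟩
    · exact homogR_add (homogR_cast (homogR_mul hp hp') (by ring))
        (homogR_cast (homogR_mul homogR_a (homogR_mul hq hq')) (by ring))
    · exact homogR_add (homogR_add (homogR_cast (homogR_mul hp hq') (by ring))
        (homogR_cast (homogR_mul hq hp') (by ring)))
        (homogR_cast (homogR_mul homogR_h (homogR_mul hq hq')) (by ring))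
    · simp only [map_add, map_mul]
      linear_combination (algebraMap R A q * algebraMap R A q') * X_sq
  · rintro k x ⟨p, q, hp, hq, rfl⟩
    have hx : Δ (algebraMap R A p + algebraMap R A q * XA) = p • Δ 1 + q • Δ XA := by
      rw [← map_smul, ← map_smul, ← map_add]
      congr 1
      rw [Algebra.smul_def, Algebra.smul_def, mul_one]
    rw [hx, hΔ1, hΔX]
    have e1 : p • ((1 : A) ⊗ₜ[R] XA) = (algebraMap R A p) ⊗ₜ XA := by
      rw [smul_tmul', Algebra.smul_def, mul_one]
    have e2 : p • (XA ⊗ₜ[R] (1 : A)) = XA ⊗ₜ (algebraMap R A p) := by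
      rw [← tmul_smul, Algebra.smul_def, mul_one]
    have e3 : p • (hR • ((1 : A) ⊗ₜ[R] (1 : A))) = (algebraMap R A (p * hR)) ⊗ₜ (1 : A) := by
      rw [smul_smul, smul_tmul', Algebra.smul_def, mul_one]
    have e4 : q • (XA ⊗ₜ[R] XA) = (algebraMap R A q * XA) ⊗ₜ XA := by
      rw [smul_tmul', Algebra.smul_def]
    have e5 : q • (aR • ((1 : A) ⊗ₜ[R] (1 : A))) = (algebraMap R A (q * aR)) ⊗ₜ (1 : A) := by
      rw [smul_smul, smul_tmul', Algebra.smul_def, mul_one]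
    rw [smul_add, smul_sub, smul_add, e1, e2, e3, e4, e5]
    have mem : ∀ (u v : A) (k₁ k₂ : ℤ), k₁ + k₂ = k + 1 → HomogA u k₁ → HomogA v k₂ →
        (u ⊗ₜ[R] v) ∈ Submodule.span ℤ {t : A ⊗[R] A |
          ∃ (u v : A) (k₁ k₂ : ℤ), k₁ + k₂ = k + 1 ∧ HomogA u k₁ ∧ HomogA v k₂ ∧
            t = u ⊗ₜ v} := fun u v k₁ k₂ h hu hv =>
      Submodule.subset_span ⟨u, v, k₁, k₂, h, hu, hv, rfl⟩
    refine add_mem (sub_mem (add_mem ?_ ?_) ?_) (add_mem ?_ ?_)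
    · exact mem _ _ k 1 (by ring) (by simpa using homogA_map hp) homogA_X
    · exact mem _ _ 1 k (by ring) homogA_X (by simpa using homogA_map hp)
    · exact mem _ _ (k + 2) (-1) (by ring)
        (homogA_cast (homogA_map (n := k + 3) (homogR_cast (homogR_mul hp homogR_h) (by ring)))
          (by ring)) homogA_one
    · exact mem _ _ k 1 (by ring) (by simpa using homogA_mapX hq) homogA_X
    · exact mem _ _ (k + 2) (-1) (by ring)
        (homogA_cast (homogA_map (n := k + 3) (homogR_cast (homogR_mul hq homogR_a) (by ring)))
          (by ring)) homogA_one
  · rintro k x ⟨p, q, hp, hq, rfl⟩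
    have hx : ε (algebraMap R A p + algebraMap R A q * XA) = p • ε 1 + q • ε XA := by
      rw [← map_smul, ← map_smul, ← map_add]
      congr 1
      rw [Algebra.smul_def, Algebra.smul_def, mul_one]
    rw [hx, hε1, hεX, smul_zero, zero_add, smul_eq_mul, mul_one]
    exact hq
end
end

section
/- The evaluation of a closed surface of genus g in the universal sl(2) theory, namely ε(G^g(1)) where G = m∘Δ, equals 0 when g is even and equals 2(h² + 4a)^((g-1)/2) when g is odd. -/
noncomputable section

open Polynomial

lemma XA_sq : XA ^ 2 = algebraMap R A hR * XA + algebraMap R A aR := by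
  have h := AdjoinRoot.eval₂_root fpoly
  simp only [fpoly, eval₂_sub, eval₂_mul, eval₂_pow, eval₂_X, eval₂_C] at h
  have : (AdjoinRoot.of fpoly) = algebraMap R A := rfl
  rw [this] at h
  linear_combination h

lemma Gsq : (2 * XA - algebraMap R A hR) ^ 2 = algebraMap R A (hR ^ 2 + 4 * aR) := by
  have h := XA_sq
  push_cast [map_add, map_mul, map_pow, map_ofNat]
  ring_nf
  ring_nf at h
  linear_combination 4 * h

/-- The evaluation `ε(Gᵍ(1))` of a closed surface of genus `g`, where `G = m∘Δ` is
multiplication by `2X - h`, is `0` for even `g` and `2(h² + 4a)^((g-1)/2)` for odd `g`. -/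
theorem closed_surface_evaluation (ε : A →ₗ[R] R) (hε1 : ε 1 = 0) (hεX : ε XA = 1)
    (G : A → A) (hG : ∀ y : A, G y = (2 * XA - algebraMap R A hR) * y) :
    ∀ g : ℕ,
      (Even g → ε (G^[g] 1) = 0) ∧
      (Odd g → ε (G^[g] 1) = 2 * (hR ^ 2 + 4 * aR) ^ ((g - 1) / 2)) := by
  set D : R := hR ^ 2 + 4 * aR with hD
  have key : ∀ k : ℕ, G^[2 * k] 1 = algebraMap R A (D ^ k) ∧
      G^[2 * k + 1] 1 = algebraMap R A (D ^ k) * (2 * XA - algebraMap R A hR) := by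
    intro k
    induction k with
    | zero => simp [hG]
    | succ n ih =>
      obtain ⟨h1, h2⟩ := ih
      constructor
      · have : 2 * (n + 1) = (2 * n + 1) + 1 := by ring
        rw [this, Function.iterate_succ_apply', h2, hG, pow_succ, map_mul]
        rw [← Gsq]; ring
      · have : 2 * (n + 1) + 1 = (2 * (n + 1)) + 1 := rfl
        rw [this, Function.iterate_succ_apply',
          show 2 * (n + 1) = (2 * n + 1) + 1 from by ring,
          Function.iterate_succ_apply', h2, hG, hG, pow_succ, map_mul, ← Gsq]
        ring
  have hsmul : ∀ (r : R) (x : A), algebraMap R A r * x = r • x := fun r x =>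
    (Algebra.smul_def r x).symm
  intro g
  constructor
  · rintro ⟨k, rfl⟩
    have := (key k).1
    rw [show k + k = 2 * k from by ring, this, ← mul_one (algebraMap R A (D ^ k)),
      hsmul, map_smul, hε1, smul_zero]
  · rintro ⟨k, rfl⟩
    have := (key k).2
    rw [this, hsmul, map_smul]
    have hε2 : ε (2 * XA - algebraMap R A hR) = 2 := by
      have : (2 : A) * XA - algebraMap R A hR =
          (2 : R) • XA - hR • (1 : A) := by
        rw [← hsmul, ← hsmul]; push_cast [map_ofNat]; ring
      rw [this, map_sub, map_smul, map_smul, hεX, hε1]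
      simp
    rw [hε2]
    have : (2 * k + 1 - 1) / 2 = k := by omega
    rw [this, smul_eq_mul]; ring
end
end

section
/- With notation as above, the elements {Q_φ : φ admissible} form a complete set of orthogonal idempotents in R(Γ): Σ_{φ ∈ C(Γ)} Q_φ = 1 and Q_φ·Q_ψ = δ_{φψ}·Q_φ, and R(Γ) decomposes as a direct sum of ℂ-algebras R(Γ) ≅ ⊕_{φ ∈ AC(Γ)} Q_φ·ℂ, each summand being one-dimensional. -/
noncomputable section

open MvPolynomial

/-- The ideal of relations defining `R(Γ)`: `X_j² = hX_j + a` for every edge `j`, and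
`X_j + X_k = h`, `X_j·X_k = -a` for every pair of edges `{j,k}` meeting at a vertex,
where `h = α + β` and `a = -αβ`. -/
def relIdeal (α β : ℂ) (E : Type) (V : Set (E × E)) : Ideal (MvPolynomial E ℂ) :=
  Ideal.span
    ({p | ∃ j : E, p = X j ^ 2 - C (α + β) * X j - C (-(α * β))} ∪
     {p | ∃ jk ∈ V, p = X jk.1 + X jk.2 - C (α + β)} ∪
     {p | ∃ jk ∈ V, p = X jk.1 * X jk.2 + C (-(α * β))})

/-- The algebra `R(Γ)` associated to a graph with edge set `E` and vertex pairs `V`. -/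
abbrev RGamma (α β : ℂ) (E : Type) (V : Set (E × E)) : Type :=
  MvPolynomial E ℂ ⧸ relIdeal α β E V

/-- The generator `X_j` of `R(Γ)`. -/
def xg (α β : ℂ) (E : Type) (V : Set (E × E)) (j : E) : RGamma α β E V :=
  Ideal.Quotient.mk _ (X j)

/-- `Q_c(t)` for a color `c ∈ {α, β}`: `Q_α(t) = (α-β)⁻¹(t - β)`, `Q_β(t) = (β-α)⁻¹(t - α)`. -/
def Qcolor (α β : ℂ) {S : Type} [CommRing S] [Algebra ℂ S] (c : ℂ) (t : S) : S :=
  if c = α then (α - β)⁻¹ • (t - algebraMap ℂ S β) else (β - α)⁻¹ • (t - algebraMap ℂ S α)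

/-- `Q_φ = ∏_{j ∈ E} Q_{φ(j)}(X_j)` in `R(Γ)`. -/
def Qphi (α β : ℂ) (E : Type) [Fintype E] (V : Set (E × E)) (φ : E → ℂ) : RGamma α β E V :=
  ∏ j : E, Qcolor α β (φ j) (xg α β E V j)

/-- The coloring `E → {α, β}` encoded by a Boolean function: `true ↦ α`, `false ↦ β`. -/
def colorOf (α β : ℂ) (c : E → Bool) : E → ℂ := fun j => if c j then α else β

/-- A Boolean coloring is admissible when the two edges of each vertex pair get
different colors. -/
def Admissible (E : Type) (V : Set (E × E)) (c : E → Bool) : Prop :=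
  ∀ p ∈ V, c p.1 ≠ c p.2

/-!
For each edge `j` the relation `(X_j - α)(X_j - β) = 0` makes `Q_α(X_j), Q_β(X_j)` a complete pair
of orthogonal idempotents, so the products `Q_φ` over all colorings are again complete orthogonal
idempotents, and orthogonality alone makes the lines `ℂ Q_φ` independent. Since
`X_j Q_φ = φ(j) Q_φ`, every `x Q_φ` is a multiple of `Q_φ`, and `x = ∑ x Q_φ` shows that the lines
span. At a vertex `{j, k}` the relations give `Q_γ(X_j) Q_γ(X_k) = 0`, so `Q_φ = 0` unless `φ` is
admissible; for admissible `φ`, evaluating `X_j ↦ φ(j)` is a character of `R(Γ)` sending `Q_φ`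
to `1`.
-/

section Idempotents

variable {R A ι : Type*}

theorem CompleteOrthogonalIdempotents.prod_pi [CommRing A] {E : Type*} [Fintype E]
    [DecidableEq E] [Fintype ι] {e : E → ι → A} (he : ∀ j, CompleteOrthogonalIdempotents (e j)) :
    CompleteOrthogonalIdempotents (fun c : E → ι => ∏ j, e j (c j)) := by
  refine CompleteOrthogonalIdempotents.iff_ortho_complete.mpr ⟨fun c c' hne => ?_, ?_⟩
  · obtain ⟨j, hj⟩ := Function.ne_iff.mp hne
    rw [← Finset.prod_mul_distrib]
    exact Finset.prod_eq_zero (Finset.mem_univ j) ((he j).ortho hj)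
  · rw [← Fintype.prod_sum]
    exact Finset.prod_eq_one fun j _ => (he j).complete

theorem OrthogonalIdempotents.iSupIndep_span_singleton [CommSemiring R] [Semiring A]
    [Algebra R A] {e : ι → A} (he : OrthogonalIdempotents e) :
    iSupIndep fun i => Submodule.span R {e i} := by
  refine fun i => Submodule.disjoint_def.mpr fun x hx hx' => ?_
  obtain ⟨s, rfl⟩ := Submodule.mem_span_singleton.mp hx
  have hkill : (⨆ (j) (_ : j ≠ i), Submodule.span R {e j}) ≤
      LinearMap.ker (LinearMap.mulRight R (e i)) :=
    iSup₂_le fun j hj => by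
      rw [Submodule.span_singleton_le_iff_mem, LinearMap.mem_ker, LinearMap.mulRight_apply,
        he.ortho hj]
  have h0 := hkill hx'
  rwa [LinearMap.mem_ker, LinearMap.mulRight_apply, smul_mul_assoc, (he.idem i).eq] at h0

theorem iSup_span_singleton_subtype_eq_top [CommSemiring R] [Semiring A] [Algebra R A]
    [Fintype ι] {e : ι → A} (hsum : ∑ i, e i = 1) (hmul : ∀ i x, ∃ s : R, x * e i = s • e i)
    {p : ι → Prop} (hp : ∀ i, ¬ p i → e i = 0) :
    ⨆ i : {i // p i}, Submodule.span R {e i} = ⊤ := by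
  refine Submodule.eq_top_iff'.mpr fun x => ?_
  rw [← mul_one x, ← hsum, Finset.mul_sum]
  refine Submodule.sum_mem _ fun i _ => ?_
  obtain ⟨s, hs⟩ := hmul i x
  by_cases hi : p i
  · rw [hs]
    exact Submodule.mem_iSup_of_mem ⟨i, hi⟩
      (Submodule.smul_mem _ _ (Submodule.mem_span_singleton_self _))
  · rw [hp i hi, mul_zero]
    exact zero_mem _

end Idempotents

theorem MvPolynomial.aeval_mul_eq_eval_smul {R A σ : Type*} [CommSemiring R] [CommSemiring A]
    [Algebra R A] {x : σ → A} {φ : σ → R} {e : A} (h : ∀ j, x j * e = φ j • e)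
    (p : MvPolynomial σ R) : aeval x p * e = eval φ p • e := by
  induction p using MvPolynomial.induction_on with
  | C r => rw [aeval_C, eval_C, Algebra.smul_def]
  | add p q hp hq => rw [map_add, map_add, add_mul, hp, hq, add_smul]
  | mul_X p j hp =>
    rw [map_mul, map_mul, aeval_X, eval_X, mul_assoc, h, mul_smul_comm, hp, smul_smul, mul_comm]

section Qcolor

variable {α β : ℂ} {S : Type} [CommRing S] [Algebra ℂ S]

theorem map_Qcolor {T : Type} [CommRing T] [Algebra ℂ T] (g : S →ₐ[ℂ] T) (γ : ℂ) (t : S) :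
    g (Qcolor α β γ t) = Qcolor α β γ (g t) := by
  unfold Qcolor
  split <;> rw [map_smul, map_sub, AlgHom.commutes]

theorem Qcolor_left (t : S) : Qcolor α β α t = (α - β)⁻¹ • (t - algebraMap ℂ S β) := if_pos rfl

theorem Qcolor_right (hab : α ≠ β) (t : S) :
    Qcolor α β β t = (β - α)⁻¹ • (t - algebraMap ℂ S α) := if_neg hab.symm

theorem Qcolor_left_add_Qcolor_right (hab : α ≠ β) (t : S) :
    Qcolor α β α t + Qcolor α β β t = 1 := by
  rw [Qcolor_left, Qcolor_right hab, ← neg_sub α β, inv_neg, neg_smul, ← sub_eq_add_neg,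
    ← smul_sub, sub_sub_sub_cancel_left, ← map_sub, Algebra.algebraMap_eq_smul_one, smul_smul,
    inv_mul_cancel₀ (sub_ne_zero.mpr hab), one_smul]

variable (hab : α ≠ β) {t : S}
include hab

theorem Qcolor_left_mul_Qcolor_right
    (ht : (t - algebraMap ℂ S α) * (t - algebraMap ℂ S β) = 0) :
    Qcolor α β α t * Qcolor α β β t = 0 := by
  rw [Qcolor_left, Qcolor_right hab, smul_mul_smul_comm, mul_comm (t - _), ht, smul_zero]

theorem completeOrthogonalIdempotents_Qcolor
    (ht : (t - algebraMap ℂ S α) * (t - algebraMap ℂ S β) = 0) :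
    CompleteOrthogonalIdempotents fun b : Bool => Qcolor α β (if b then α else β) t := by
  have hmul := Qcolor_left_mul_Qcolor_right hab ht
  refine CompleteOrthogonalIdempotents.iff_ortho_complete.mpr ⟨?_, ?_⟩
  · rintro (_ | _) (_ | _) hne <;> simp only [ne_eq, not_true_eq_false] at hne <;>
      simp only [Bool.false_eq_true, if_true, if_false, mul_comm (Qcolor α β β t), hmul]
  · rw [Fintype.sum_bool, if_pos rfl, if_neg Bool.false_ne_true]
    exact Qcolor_left_add_Qcolor_right hab t

theorem mul_Qcolor (ht : (t - algebraMap ℂ S α) * (t - algebraMap ℂ S β) = 0) (b : Bool) :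
    t * Qcolor α β (if b then α else β) t =
      (if b then α else β) • Qcolor α β (if b then α else β) t := by
  cases b
  · rw [if_neg Bool.false_ne_true, Qcolor_right hab, mul_smul_comm, smul_comm, Algebra.smul_def β]
    congr 1
    linear_combination ht
  · rw [if_pos rfl, Qcolor_left, mul_smul_comm, smul_comm, Algebra.smul_def α]
    congr 1
    linear_combination ht

theorem Qcolor_mul_Qcolor_of_add_of_mul {s : S} (hsum : s + t = algebraMap ℂ S α + algebraMap ℂ S β)
    (hprod : s * t = algebraMap ℂ S α * algebraMap ℂ S β) (b : Bool) :
    Qcolor α β (if b then α else β) s * Qcolor α β (if b then α else β) t = 0 := by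
  cases b
  · rw [if_neg Bool.false_ne_true, Qcolor_right hab, Qcolor_right hab, smul_mul_smul_comm]
    rw [show (s - algebraMap ℂ S α) * (t - algebraMap ℂ S α) = 0 by
      linear_combination hprod - algebraMap ℂ S α * hsum, smul_zero]
  · rw [if_pos rfl, Qcolor_left, Qcolor_left, smul_mul_smul_comm]
    rw [show (s - algebraMap ℂ S β) * (t - algebraMap ℂ S β) = 0 by
      linear_combination hprod - algebraMap ℂ S β * hsum, smul_zero]

theorem Qcolor_self (b : Bool) :
    Qcolor α β (if b then α else β) (if b then α else β) = 1 := by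
  cases b
  · rw [if_neg Bool.false_ne_true, Qcolor_right hab, Algebra.algebraMap_self_apply, smul_eq_mul,
      inv_mul_cancel₀ (sub_ne_zero.mpr hab.symm)]
  · rw [if_pos rfl, Qcolor_left, Algebra.algebraMap_self_apply, smul_eq_mul,
      inv_mul_cancel₀ (sub_ne_zero.mpr hab)]

end Qcolor

section RGamma

variable (α β : ℂ) (E : Type) (V : Set (E × E))

theorem mk_eq_aeval_xg (p : MvPolynomial E ℂ) :
    Ideal.Quotient.mk (relIdeal α β E V) p = aeval (xg α β E V) p := by
  rw [← Ideal.Quotient.mkₐ_eq_mk ℂ, aeval_unique (Ideal.Quotient.mkₐ ℂ (relIdeal α β E V))]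
  rfl

theorem aeval_xg_eq_zero {p : MvPolynomial E ℂ} (hp : p ∈ relIdeal α β E V) :
    aeval (xg α β E V) p = 0 := by
  rw [← mk_eq_aeval_xg, Ideal.Quotient.eq_zero_iff_mem]
  exact hp

theorem xg_sub_mul_xg_sub (j : E) :
    (xg α β E V j - algebraMap ℂ _ α) * (xg α β E V j - algebraMap ℂ _ β) = 0 := by
  have h := aeval_xg_eq_zero α β E V (Ideal.subset_span (Or.inl (Or.inl ⟨j, rfl⟩)))
  simp only [map_sub, map_mul, map_pow, aeval_X, aeval_C, map_add, map_neg] at h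
  linear_combination h

theorem xg_add_xg {jk : E × E} (hjk : jk ∈ V) :
    xg α β E V jk.1 + xg α β E V jk.2 = algebraMap ℂ _ α + algebraMap ℂ _ β := by
  have h := aeval_xg_eq_zero α β E V (Ideal.subset_span (Or.inl (Or.inr ⟨jk, hjk, rfl⟩)))
  simp only [map_sub, map_add, aeval_X, aeval_C] at h
  linear_combination h

theorem xg_mul_xg {jk : E × E} (hjk : jk ∈ V) :
    xg α β E V jk.1 * xg α β E V jk.2 = algebraMap ℂ _ α * algebraMap ℂ _ β := by
  have h := aeval_xg_eq_zero α β E V (Ideal.subset_span (Or.inr ⟨jk, hjk, rfl⟩))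
  simp only [map_add, map_mul, aeval_X, aeval_C, map_neg] at h
  linear_combination h

variable {α β E V}

theorem aeval_colorOf_eq_zero {c : E → Bool} (hc : Admissible E V c) {p : MvPolynomial E ℂ}
    (hp : p ∈ relIdeal α β E V) : aeval (colorOf α β c) p = 0 := by
  refine (Ideal.span_le (I := RingHom.ker (aeval (colorOf α β c)))).mpr ?_ hp
  rintro _ ((⟨j, rfl⟩ | ⟨jk, hjk, rfl⟩) | ⟨jk, hjk, rfl⟩) <;>
    simp only [SetLike.mem_coe, RingHom.mem_ker, map_sub, map_add, map_mul, map_pow, map_neg,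
      aeval_X, aeval_C, Algebra.algebraMap_self_apply, colorOf]
  · cases c j <;> simp only [Bool.false_eq_true, if_true, if_false] <;> ring
  all_goals
    have hne := hc jk hjk
    revert hne
    cases c jk.1 <;> cases c jk.2 <;> simp only [ne_eq, not_true_eq_false, IsEmpty.forall_iff,
      Bool.false_eq_true, Bool.true_eq_false, if_true, if_false, not_false_eq_true,
      forall_const] <;> ring

def evalColoring {c : E → Bool} (hc : Admissible E V c) : RGamma α β E V →ₐ[ℂ] ℂ :=
  Ideal.Quotient.liftₐ _ (aeval (colorOf α β c)) fun _ hp => aeval_colorOf_eq_zero hc hp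

theorem evalColoring_xg {c : E → Bool} (hc : Admissible E V c) (j : E) :
    evalColoring hc (xg α β E V j) = colorOf α β c j :=
  (Ideal.Quotient.lift_mk _ _ _).trans (aeval_X _ _)

variable [Fintype E] (hab : α ≠ β)
include hab

theorem evalColoring_Qphi {c : E → Bool} (hc : Admissible E V c) :
    evalColoring hc (Qphi α β E V (colorOf α β c)) = 1 := by
  rw [Qphi, map_prod]
  refine Finset.prod_eq_one fun j _ => ?_
  rw [map_Qcolor, evalColoring_xg]
  exact Qcolor_self hab (c j)

theorem Qphi_ne_zero {c : E → Bool} (hc : Admissible E V c) :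
    Qphi α β E V (colorOf α β c) ≠ 0 := fun h0 => by
  simpa [h0] using evalColoring_Qphi hab hc

variable [DecidableEq E]

theorem completeOrthogonalIdempotents_Qphi :
    CompleteOrthogonalIdempotents fun c : E → Bool => Qphi α β E V (colorOf α β c) :=
  CompleteOrthogonalIdempotents.prod_pi fun j =>
    completeOrthogonalIdempotents_Qcolor hab (xg_sub_mul_xg_sub α β E V j)

theorem xg_mul_Qphi (c : E → Bool) (j : E) :
    xg α β E V j * Qphi α β E V (colorOf α β c) =
      colorOf α β c j • Qphi α β E V (colorOf α β c) := by
  unfold Qphi colorOf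
  rw [← Finset.mul_prod_erase _ _ (Finset.mem_univ j), ← mul_assoc,
    mul_Qcolor hab (xg_sub_mul_xg_sub α β E V j), smul_mul_assoc]

theorem mk_mul_Qphi (c : E → Bool) (p : MvPolynomial E ℂ) :
    Ideal.Quotient.mk _ p * Qphi α β E V (colorOf α β c) =
      eval (colorOf α β c) p • Qphi α β E V (colorOf α β c) := by
  rw [mk_eq_aeval_xg]
  exact aeval_mul_eq_eval_smul (xg_mul_Qphi hab c) p

theorem Qphi_eq_zero_of_not_admissible {c : E → Bool} (hc : ¬ Admissible E V c) :
    Qphi α β E V (colorOf α β c) = 0 := by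
  obtain ⟨jk, hjk, hsame⟩ : ∃ jk ∈ V, c jk.1 = c jk.2 := by simpa [Admissible] using hc
  set q := fun j => Qcolor α β (colorOf α β c j) (xg α β E V j)
  have hpair : q jk.1 * q jk.2 = 0 := by
    simp only [q, colorOf, hsame]
    exact Qcolor_mul_Qcolor_of_add_of_mul hab (xg_add_xg α β E V hjk) (xg_mul_xg α β E V hjk) _
  obtain ⟨a, ha⟩ := Finset.dvd_prod_of_mem q (Finset.mem_univ jk.1)
  obtain ⟨b, hb⟩ := Finset.dvd_prod_of_mem q (Finset.mem_univ jk.2)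
  -- `Q_φ` is an idempotent divisible by both factors of the vanishing product `q₁ q₂`
  calc Qphi α β E V (colorOf α β c)
      = Qphi α β E V (colorOf α β c) * Qphi α β E V (colorOf α β c) :=
        ((completeOrthogonalIdempotents_Qphi hab).idem c).eq.symm
    _ = (q jk.1 * a) * (q jk.2 * b) := by rw [← ha, ← hb]; rfl
    _ = 0 := by rw [mul_mul_mul_comm, hpair, zero_mul]

end RGamma

/-- The `Q_φ`, for `φ` ranging over admissible colorings, form a complete set of
orthogonal idempotents of `R(Γ)`: they sum to `1`, satisfy `Q_φ·Q_ψ = δ_{φψ}Q_φ`, and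
give a direct-sum decomposition `R(Γ) ≅ ⊕_{φ ∈ AC(Γ)} Q_φ·ℂ` into one-dimensional
summands. -/
theorem Qphi_complete_orthogonal_decomposition (α β : ℂ) (hab : α ≠ β)
    (E : Type) [Fintype E] [DecidableEq E] (V : Set (E × E)) :
    (∑ c : E → Bool, Qphi α β E V (colorOf α β c) = 1) ∧
    (∀ c c' : E → Bool,
      Qphi α β E V (colorOf α β c) * Qphi α β E V (colorOf α β c') =
        if c = c' then Qphi α β E V (colorOf α β c) else 0) ∧
    iSupIndep
      (fun c : {c : E → Bool // Admissible E V c} =>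
        (Submodule.span ℂ {Qphi α β E V (colorOf α β c.1)} : Submodule ℂ (RGamma α β E V))) ∧
    ((⊤ : Submodule ℂ (RGamma α β E V)) =
      ⨆ c : {c : E → Bool // Admissible E V c},
        Submodule.span ℂ {Qphi α β E V (colorOf α β c.1)}) ∧
    (∀ c : E → Bool, Admissible E V c → Qphi α β E V (colorOf α β c) ≠ 0) := by
  have hQ := completeOrthogonalIdempotents_Qphi (V := V) hab
  refine ⟨hQ.complete, hQ.mul_eq, ?_, ?_, fun c hc => Qphi_ne_zero hab hc⟩
  · exact (hQ.embedding (Function.Embedding.subtype _)).iSupIndep_span_singleton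
  · refine (iSup_span_singleton_subtype_eq_top hQ.complete (fun c x => ?_)
      fun c hc => Qphi_eq_zero_of_not_admissible hab hc).symm
    obtain ⟨p, rfl⟩ := Ideal.Quotient.mk_surjective x
    exact ⟨_, mk_mul_Qphi hab c p⟩
end
end
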